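/- Suppose each f_j is twice continuously differentiable with ∇²f_j(x) positive definite for all x, and α^1 = 1. Then during the first cycle of the IN method, for each i = 1,…,m, the iterate x_{i+1}^1 is the unique minimizer over x ∈ ℝ^n of Σ_{j=1}^i f̂_j(x, x_j^1), where f̂_j(x, y) = f_j(y) + ∇f_j(y)ᵀ(x − y) + (1/2)(x − y)ᵀ∇²f_j(y)(x − y) is the second-order Taylor approximation of f_j at y. -/

import Mathlib

/-!
In the first cycle `H_i = ∑_{j ≤ i} ∇²f_j(x_j)`, so the sum of the first `i` Taylor models is a
quadratic with positive definite Hessian `H_i`; it is therefore strictly minimized exactly at the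
zero of its gradient `r_i(y) = ∑_{j ≤ i} (∇f_j(x_j) + ∇²f_j(x_j)(y - x_j))`. With unit stepsize
the Newton step reads `H_i (x_{i+1} - x_i) = -∇f_i(x_i)`, and since
`r_i(x_{i+1}) = r_{i-1}(x_i) + ∇f_i(x_i) + H_i (x_{i+1} - x_i)`, induction gives `r_i(x_{i+1}) = 0`.
-/

open Finset Filter Classical

noncomputable def taylorSum (n : ℕ) (f : ℕ → EuclideanSpace ℝ (Fin n) → ℝ)
    (g : ℕ → EuclideanSpace ℝ (Fin n) → EuclideanSpace ℝ (Fin n))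
    (hess : ℕ → EuclideanSpace ℝ (Fin n) → Matrix (Fin n) (Fin n) ℝ)
    (xc : ℕ → EuclideanSpace ℝ (Fin n)) (i : ℕ) (y : EuclideanSpace ℝ (Fin n)) : ℝ :=
  ∑ j ∈ Finset.Icc 1 i,
    (f j (xc j) + (inner ℝ (g j (xc j)) (y - xc j) : ℝ)
      + (1/2) * (inner ℝ (y - xc j) ((Matrix.toEuclideanCLM (𝕜 := ℝ) (hess j (xc j))) (y - xc j)) : ℝ))

lemma eq_sum_Icc_of_eq_add {M : Type*} [AddCommMonoid M] {s a : ℕ → M} {m : ℕ}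
    (h0 : s 0 = 0) (hrec : ∀ i ∈ Icc 1 m, s i = s (i - 1) + a i) :
    ∀ i ≤ m, s i = ∑ j ∈ Icc 1 i, a j := by
  intro i
  induction i with
  | zero => simp [h0]
  | succ i ih =>
    intro hi
    rw [hrec (i + 1) (mem_Icc.mpr ⟨by omega, hi⟩), Nat.add_sub_cancel, ih (by omega),
      sum_Icc_succ_top (by omega)]

lemma sum_add_apply_sub_eq_zero {E F : Type*} [AddCommGroup E] [FunLike F E E]
    [AddMonoidHomClass F E E] (A : ℕ → F) (g x : ℕ → E) {m : ℕ}
    (hstep : ∀ i ∈ Icc 1 m, ∑ j ∈ Icc 1 i, A j (x (i + 1) - x i) + g i = 0) :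
    ∀ i ≤ m, ∑ j ∈ Icc 1 i, (g j + A j (x (i + 1) - x j)) = 0 := by
  intro i
  induction i with
  | zero => simp
  | succ i ih =>
    intro hi
    set d := x (i + 1 + 1) - x (i + 1) with hd
    have hsplit : ∀ j, A j (x (i + 1 + 1) - x j) = A j (x (i + 1) - x j) + A j d :=
      fun j => by rw [← map_add, hd, sub_add_sub_cancel']
    calc ∑ j ∈ Icc 1 (i + 1), (g j + A j (x (i + 1 + 1) - x j))
        = ∑ j ∈ Icc 1 (i + 1), (g j + A j (x (i + 1) - x j)) + ∑ j ∈ Icc 1 (i + 1), A j d := by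
          simp only [hsplit, ← add_assoc, sum_add_distrib]
      _ = ∑ j ∈ Icc 1 i, (g j + A j (x (i + 1) - x j))
            + (∑ j ∈ Icc 1 (i + 1), A j d + g (i + 1)) := by
          rw [sum_Icc_succ_top (by omega : 1 ≤ i + 1), sub_self, map_zero]; abel
      _ = 0 := by rw [ih (by omega), hstep (i + 1) (mem_Icc.mpr ⟨by omega, hi⟩), add_zero]

section QuadraticModel

variable {E : Type*} [NormedAddCommGroup E] [InnerProductSpace ℝ E]

/-- With `c = f a`, `g = ∇f a` and `A = ∇²f a` this is the paper's Taylor model `f̂(y, a)`;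
`taylorSum` is definitionally a sum of these. -/
noncomputable def quadModel (c : ℝ) (g a : E) (A : E →L[ℝ] E) (y : E) : ℝ :=
  c + inner ℝ g (y - a) + (1 / 2) * inner ℝ (y - a) (A (y - a))

lemma quadModel_eq_add {A : E →L[ℝ] E} (hA : (A : E →ₗ[ℝ] E).IsSymmetric) (c : ℝ) (g a y z : E) :
    quadModel c g a A y = quadModel c g a A z + inner ℝ (y - z) (g + A (z - a))
      + (1 / 2) * inner ℝ (y - z) (A (y - z)) := by
  have hy : y - a = (y - z) + (z - a) := by abel
  have hsymm : inner ℝ (z - a) (A (y - z)) = inner ℝ (y - z) (A (z - a)) :=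
    (hA (z - a) (y - z)).symm.trans (real_inner_comm _ _)
  simp only [quadModel, hy, map_add, inner_add_left, inner_add_right, hsymm,
    real_inner_comm g (y - z)]
  ring

lemma sum_quadModel_eq_add {ι : Type*} (s : Finset ι) (c : ι → ℝ) (g a : ι → E)
    (A : ι → E →L[ℝ] E) (hA : ∀ j ∈ s, (A j : E →ₗ[ℝ] E).IsSymmetric) (y z : E) :
    ∑ j ∈ s, quadModel (c j) (g j) (a j) (A j) y = ∑ j ∈ s, quadModel (c j) (g j) (a j) (A j) z
      + inner ℝ (y - z) (∑ j ∈ s, (g j + A j (z - a j)))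
      + (1 / 2) * ∑ j ∈ s, inner ℝ (y - z) (A j (y - z)) := by
  rw [sum_congr rfl fun j hj => quadModel_eq_add (hA j hj) (c j) (g j) (a j) y z,
    sum_add_distrib, sum_add_distrib, inner_sum, mul_sum]

lemma sum_quadModel_lt {ι : Type*} {s : Finset ι} (hs : s.Nonempty) (c : ι → ℝ) (g a : ι → E)
    (A : ι → E →L[ℝ] E) (hA : ∀ j ∈ s, (A j : E →ₗ[ℝ] E).IsSymmetric)
    (hpos : ∀ j ∈ s, ∀ d ≠ 0, 0 < inner ℝ d (A j d)) {z : E}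
    (hz : ∑ j ∈ s, (g j + A j (z - a j)) = 0) {y : E} (hyz : y ≠ z) :
    ∑ j ∈ s, quadModel (c j) (g j) (a j) (A j) z < ∑ j ∈ s, quadModel (c j) (g j) (a j) (A j) y := by
  have hcurv : 0 < ∑ j ∈ s, inner ℝ (y - z) (A j (y - z)) :=
    sum_pos (fun j hj => hpos j hj _ (sub_ne_zero.mpr hyz)) hs
  rw [sum_quadModel_eq_add s c g a A hA y z, hz, inner_zero_right]
  linarith

end QuadraticModel

lemma forall_le_and_unique_of_forall_ne_lt {α : Type*} {F : α → ℝ} {z : α}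
    (h : ∀ y, y ≠ z → F z < F y) :
    (∀ y, F z ≤ F y) ∧ ∀ z', (∀ y, F z' ≤ F y) → z' = z := by
  refine ⟨fun y => ?_, fun z' hz' => ?_⟩
  · rcases eq_or_ne y z with rfl | hyz
    · exact le_rfl
    · exact (h y hyz).le
  · by_contra hne
    exact (h z' hne).not_ge (hz' z)

lemma Matrix.PosDef.inner_toEuclideanCLM_pos {ι : Type*} [Fintype ι] [DecidableEq ι]
    {M : Matrix ι ι ℝ} (hM : M.PosDef) {d : EuclideanSpace ℝ ι} (hd : d ≠ 0) :
    0 < inner ℝ d (Matrix.toEuclideanCLM (𝕜 := ℝ) M d) := by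
  rw [Matrix.inner_toEuclideanCLM]
  simpa using hM.dotProduct_mulVec_pos (x := WithLp.ofLp d) (by simpa using hd)

lemma Matrix.isSymmetric_toEuclideanCLM {ι : Type*} [Fintype ι] [DecidableEq ι]
    {M : Matrix ι ι ℝ} (hM : M.IsHermitian) :
    (Matrix.toEuclideanCLM (𝕜 := ℝ) M : EuclideanSpace ℝ ι →ₗ[ℝ] EuclideanSpace ℝ ι).IsSymmetric :=
  Matrix.isSymmetric_toEuclideanLin_iff.mpr hM

lemma Matrix.toEuclideanCLM_apply_inv_apply {ι : Type*} [Fintype ι] [DecidableEq ι]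
    {M : Matrix ι ι ℝ} (hM : IsUnit M) (v : EuclideanSpace ℝ ι) :
    Matrix.toEuclideanCLM (𝕜 := ℝ) M (Matrix.toEuclideanCLM (𝕜 := ℝ) M⁻¹ v) = v := by
  change (Matrix.toEuclideanCLM (𝕜 := ℝ) M * Matrix.toEuclideanCLM (𝕜 := ℝ) M⁻¹) v = v
  rw [← map_mul, Matrix.mul_nonsing_inv _ ((Matrix.isUnit_iff_isUnit_det M).mp hM), map_one]
  rfl

theorem statement13_general
    (n m : ℕ)
    (f : ℕ → EuclideanSpace ℝ (Fin n) → ℝ)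
    (g : ℕ → EuclideanSpace ℝ (Fin n) → EuclideanSpace ℝ (Fin n))
    (hess : ℕ → EuclideanSpace ℝ (Fin n) → Matrix (Fin n) (Fin n) ℝ)
    (α : ℕ → ℝ)
    (x : ℕ → ℕ → EuclideanSpace ℝ (Fin n))
    (H : ℕ → ℕ → Matrix (Fin n) (Fin n) ℝ)
    (hH0 : H 1 0 = 0)
    (hHrec : ∀ k, 1 ≤ k → ∀ i ∈ Finset.Icc 1 m, H k i = H k (i-1) + hess i (x k i))
    (hiter : ∀ k, 1 ≤ k → ∀ i ∈ Finset.Icc 1 m,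
      x k (i+1) = x k i - α k • (Matrix.toEuclideanCLM (𝕜 := ℝ) (H k i)⁻¹) (g i (x k i)))
    (hpd : ∀ i ∈ Finset.Icc 1 m, ∀ y, (hess i y).PosDef)
    (hα1 : α 1 = 1) :
    ∀ i ∈ Finset.Icc 1 m,
      (∀ y, taylorSum n f g hess (fun j => x 1 j) i (x 1 (i+1))
          ≤ taylorSum n f g hess (fun j => x 1 j) i y) ∧
      (∀ z, (∀ y, taylorSum n f g hess (fun j => x 1 j) i z
          ≤ taylorSum n f g hess (fun j => x 1 j) i y) → z = x 1 (i+1)) := by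
  set A := fun j => Matrix.toEuclideanCLM (𝕜 := ℝ) (hess j (x 1 j))
  have hHsum : ∀ i ≤ m, H 1 i = ∑ j ∈ Icc 1 i, hess j (x 1 j) :=
    eq_sum_Icc_of_eq_add hH0 (hHrec 1 le_rfl)
  have hHpd : ∀ i ∈ Icc 1 m, (H 1 i).PosDef := fun i hi => by
    rw [hHsum i (mem_Icc.mp hi).2]
    exact Matrix.posDef_sum (nonempty_Icc.mpr (mem_Icc.mp hi).1) fun j hj =>
      hpd j (Icc_subset_Icc_right (mem_Icc.mp hi).2 hj) _
  have hnewton : ∀ i ∈ Icc 1 m, ∑ j ∈ Icc 1 i, A j (x 1 (i + 1) - x 1 i) + g i (x 1 i) = 0 := by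
    intro i hi
    rw [← _root_.sum_apply, ← map_sum, ← hHsum i (mem_Icc.mp hi).2,
      hiter 1 le_rfl i hi, hα1, one_smul, sub_sub_cancel_left, map_neg,
      Matrix.toEuclideanCLM_apply_inv_apply (hHpd i hi).isUnit, neg_add_cancel]
  have hstationary := sum_add_apply_sub_eq_zero A (fun j => g j (x 1 j)) (x 1) hnewton
  intro i hi
  have hsub : Icc 1 i ⊆ Icc 1 m := Icc_subset_Icc_right (mem_Icc.mp hi).2
  exact forall_le_and_unique_of_forall_ne_lt (F := taylorSum n f g hess (fun j => x 1 j) i)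
    fun y hy => sum_quadModel_lt (nonempty_Icc.mpr (mem_Icc.mp hi).1) _ _ _ A
      (fun j hj => Matrix.isSymmetric_toEuclideanCLM (hpd j (hsub hj) _).isHermitian)
      (fun j hj _ hd => (hpd j (hsub hj) _).inner_toEuclideanCLM_pos hd)
      (hstationary i (mem_Icc.mp hi).2) hy

theorem statement13
    (n m : ℕ) (hm : 1 < m)
    (f : ℕ → EuclideanSpace ℝ (Fin n) → ℝ)
    (g : ℕ → EuclideanSpace ℝ (Fin n) → EuclideanSpace ℝ (Fin n))
    (hess : ℕ → EuclideanSpace ℝ (Fin n) → Matrix (Fin n) (Fin n) ℝ)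
    (hgrad : ∀ i ∈ Finset.Icc 1 m, ∀ y, HasGradientAt (f i) (g i y) y)
    (hhess : ∀ i ∈ Finset.Icc 1 m, ∀ y, HasFDerivAt (g i) (Matrix.toEuclideanCLM (𝕜 := ℝ) (hess i y)) y)
    (hcont : ∀ i ∈ Finset.Icc 1 m, Continuous (hess i))
    (α : ℕ → ℝ) (hα : ∀ k, 1 ≤ k → 0 < α k)
    (x : ℕ → ℕ → EuclideanSpace ℝ (Fin n))
    (H : ℕ → ℕ → Matrix (Fin n) (Fin n) ℝ)
    (hH0 : H 1 0 = 0)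
    (hHnext : ∀ k, 1 ≤ k → H (k+1) 0 = H k m)
    (hHrec : ∀ k, 1 ≤ k → ∀ i ∈ Finset.Icc 1 m, H k i = H k (i-1) + hess i (x k i))
    (hxnext : ∀ k, 1 ≤ k → x (k+1) 1 = x k (m+1))
    (hiter : ∀ k, 1 ≤ k → ∀ i ∈ Finset.Icc 1 m,
      x k (i+1) = x k i - α k • (Matrix.toEuclideanCLM (𝕜 := ℝ) (H k i)⁻¹) (g i (x k i)))
    (hpd : ∀ i ∈ Finset.Icc 1 m, ∀ y, (hess i y).PosDef)
    (hα1 : α 1 = 1) :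
    ∀ i ∈ Finset.Icc 1 m,
      (∀ y, taylorSum n f g hess (fun j => x 1 j) i (x 1 (i+1))
          ≤ taylorSum n f g hess (fun j => x 1 j) i y) ∧
      (∀ z, (∀ y, taylorSum n f g hess (fun j => x 1 j) i z
          ≤ taylorSum n f g hess (fun j => x 1 j) i y) → z = x 1 (i+1)) :=
  statement13_general n m f g hess α x H hH0 hHrec hiter hpd hα1
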